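/- arXiv:1303.0308 — 5 statements merged into one kernel-verified Lean document; each statement's English description precedes it below -/
import Mathlib

section
/- Let Π be a real (n₁−n₂)×n₂ matrix and Ψ a symmetric positive definite n₁×n₁ real matrix, partitioned as Ψ = [[Ψ₁₁, Ψ₁₂],[Ψ₁₂ᵀ, Ψ₂₂]] with Ψ₁₁ of size n₂×n₂. Define Ψᵉ := [[I, Πᵀ],[0,0]] · Ψ · [[I, 0],[Π, 0]] (block matrices of size n₁×n₁). Then Ψ − Ψᵉ is positive semidefinite if and only if Ψ₁₂ = −Πᵀ Ψ₂₂. -/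
/-!
Write `Ψ = [[A, B], [Bᴴ, D]]`. A direct block computation gives
`Ψ - Ψᵉ = [[-(B P + Pᴴ Bᴴ + Pᴴ D P), B], [Bᴴ, D]]`, whose Schur complement with respect to the
positive definite block `D` is `-(B + Pᴴ D) D⁻¹ (B + Pᴴ D)ᴴ`. Since `D⁻¹` is positive definite, this
negative semidefinite matrix is positive semidefinite only when it vanishes, i.e. when
`B + Pᴴ D = 0`.
-/

open Matrix
open scoped ComplexOrder

namespace Matrix

variable {l m n 𝕜 : Type*}

theorem IsHermitian.fromBlocks_toBlocks {R : Type*} [Star R] {M : Matrix (l ⊕ m) (l ⊕ m) R}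
    (hM : M.IsHermitian) :
    Matrix.fromBlocks M.toBlocks₁₁ M.toBlocks₁₂ M.toBlocks₁₂ᴴ M.toBlocks₂₂ = M := by
  conv_rhs => rw [← Matrix.fromBlocks_toBlocks M]
  congr
  ext i j
  exact hM.apply (Sum.inr i) (Sum.inl j)

theorem PosDef.toBlocks₂₂ {R : Type*} [Ring R] [PartialOrder R] [StarRing R] [Fintype m]
    {M : Matrix (l ⊕ m) (l ⊕ m) R} (hM : M.PosDef) : M.toBlocks₂₂.PosDef :=
  hM.submatrix Sum.inr_injective

theorem fromBlocks_sub_fromBlocks_mul_mul_fromBlocks {α : Type*} [Ring α] [Fintype l] [Fintype m]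
    [DecidableEq l] (A : Matrix l l α) (B : Matrix l m α) (C : Matrix m l α) (D : Matrix m m α)
    (P : Matrix m l α) (Q : Matrix l m α) :
    fromBlocks A B C D - fromBlocks 1 Q 0 0 * fromBlocks A B C D * fromBlocks 1 0 P 0 =
      fromBlocks (-(B * P + Q * C + Q * D * P)) B C D := by
  rw [fromBlocks_multiply, fromBlocks_multiply, sub_eq_add_neg, fromBlocks_neg, fromBlocks_add]
  congr 1 <;> simp only [Matrix.one_mul, Matrix.zero_mul, Matrix.mul_zero, Matrix.mul_one,
    Matrix.add_mul, add_zero, neg_zero]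
  abel

theorem add_mul_nonsing_inv_mul_add {α : Type*} [CommRing α] [Fintype l] [Fintype m]
    [DecidableEq m] (B : Matrix l m α) (C : Matrix m l α) {D : Matrix m m α} (hD : IsUnit D)
    (P : Matrix m l α) (Q : Matrix l m α) :
    (B + Q * D) * D⁻¹ * (C + D * P) = B * D⁻¹ * C + B * P + Q * C + Q * D * P := by
  have := hD.invertible
  simp only [Matrix.add_mul, Matrix.mul_add, Matrix.mul_assoc, mul_inv_cancel_left_of_invertible,
    inv_mul_cancel_left_of_invertible]
  abel

variable [RCLike 𝕜] [Fintype m] [Fintype n]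

open scoped MatrixOrder in
theorem PosDef.neg_mul_mul_conjTranspose_posSemidef_iff {Q : Matrix n n 𝕜} (hQ : Q.PosDef)
    (M : Matrix m n 𝕜) : (-(M * Q * Mᴴ)).PosSemidef ↔ M = 0 := by
  refine ⟨fun h => ?_, by rintro rfl; simpa using PosSemidef.zero⟩
  have hzero : M * Q * Mᴴ = 0 :=
    le_antisymm (by simpa [le_iff] using h) (hQ.posSemidef.mul_mul_conjTranspose_same M).nonneg
  have hker : ∀ x, Mᴴ *ᵥ x = 0 := fun x => by
    by_contra hx
    have := hQ.dotProduct_mulVec_pos hx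
    rw [star_mulVec, conjTranspose_conjTranspose, dotProduct_mulVec, vecMul_vecMul,
      ← dotProduct_mulVec, mulVec_mulVec, hzero] at this
    simp at this
  rw [← conjTranspose_eq_zero]
  exact mulVec_injective (funext fun x => (hker x).trans (zero_mulVec x).symm)

theorem posSemidef_fromBlocks_sub_fromBlocks_mul_mul_fromBlocks_iff [DecidableEq m] [DecidableEq n]
    (A : Matrix m m 𝕜) (B : Matrix m n 𝕜) {D : Matrix n n 𝕜} (hD : D.PosDef)
    (P : Matrix n m 𝕜) :
    (fromBlocks A B Bᴴ D - fromBlocks 1 Pᴴ 0 0 * fromBlocks A B Bᴴ D *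
      fromBlocks 1 0 P 0).PosSemidef ↔ B = -(Pᴴ * D) := by
  have := hD.isUnit.invertible
  have hschur : -(B * P + Pᴴ * Bᴴ + Pᴴ * D * P) - B * D⁻¹ * Bᴴ =
      -((B + Pᴴ * D) * D⁻¹ * (B + Pᴴ * D)ᴴ) := by
    rw [conjTranspose_add, conjTranspose_mul, conjTranspose_conjTranspose, hD.isHermitian.eq,
      add_mul_nonsing_inv_mul_add _ _ hD.isUnit]
    abel
  rw [fromBlocks_sub_fromBlocks_mul_mul_fromBlocks, PosDef.fromBlocks₂₂ _ _ hD, hschur,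
    hD.inv.neg_mul_mul_conjTranspose_posSemidef_iff, add_eq_zero_iff_eq_neg]

end Matrix

theorem stmt0_general (n₂ m : ℕ)
    (P : Matrix (Fin m) (Fin n₂) ℝ)
    (Ψ : Matrix (Fin n₂ ⊕ Fin m) (Fin n₂ ⊕ Fin m) ℝ)
    (hpd : Ψ.PosDef)
    (Ψe : Matrix (Fin n₂ ⊕ Fin m) (Fin n₂ ⊕ Fin m) ℝ)
    (hΨe : Ψe = (Matrix.fromBlocks 1 Pᵀ 0 0) * Ψ * (Matrix.fromBlocks 1 0 P 0)) :
    (Ψ - Ψe).PosSemidef ↔ Ψ.toBlocks₁₂ = -(Pᵀ * Ψ.toBlocks₂₂) := by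
  have key := posSemidef_fromBlocks_sub_fromBlocks_mul_mul_fromBlocks_iff Ψ.toBlocks₁₁ Ψ.toBlocks₁₂
    hpd.toBlocks₂₂ P
  rwa [hpd.isHermitian.fromBlocks_toBlocks, conjTranspose_eq_transpose_of_trivial, ← hΨe] at key

/-- For symmetric positive definite `Ψ` partitioned in blocks,
`Ψ − Ψᵉ ⪰ 0` iff `Ψ₁₂ = −Pᵀ Ψ₂₂`, where
`Ψᵉ = [[I, Pᵀ],[0,0]] * Ψ * [[I,0],[P,0]]`. -/
theorem stmt0 (n₂ m : ℕ)
    (P : Matrix (Fin m) (Fin n₂) ℝ)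
    (Ψ : Matrix (Fin n₂ ⊕ Fin m) (Fin n₂ ⊕ Fin m) ℝ)
    (hsym : Ψ.IsSymm) (hpd : Ψ.PosDef)
    (Ψe : Matrix (Fin n₂ ⊕ Fin m) (Fin n₂ ⊕ Fin m) ℝ)
    (hΨe : Ψe = (Matrix.fromBlocks 1 Pᵀ 0 0) * Ψ * (Matrix.fromBlocks 1 0 P 0)) :
    (Ψ - Ψe).PosSemidef ↔ Ψ.toBlocks₁₂ = -(Pᵀ * Ψ.toBlocks₂₂) :=
  stmt0_general n₂ m P Ψ hpd Ψe hΨe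
end

section
/- Let R ∈ ℝ[ξ]^{w×w} be nonsingular (det R ≠ 0) and write n = deg det R. The set 𝔛(R) = { f ∈ ℝ[ξ]^{1×w} : f · R⁻¹ is a strictly proper rational row vector } is an ℝ-vector subspace of ℝ[ξ]^{1×w} of dimension n. -/
/-!
Since `R⁻¹ = adj R / det R`, the row `f R⁻¹` is strictly proper iff every entry of `f adj R` has
degree `< deg det R`. Division with remainder by `det R` shows that these rows form an
`ℝ`-linear complement of the row module `ℝ[ξ]^{1×w} R`, so `𝔛(R)` is isomorphic to the cokernel
`ℝ[ξ]^{1×w} / ℝ[ξ]^{1×w} R`. In Smith normal form this cokernel is `⨁ ℝ[ξ]/(aᵢ)` with `∏ aᵢ`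
associated to `det R`, so its dimension is `∑ deg aᵢ = deg det R`.
-/

open Matrix Polynomial

/-- A rational function is strictly proper if its numerator has strictly smaller
degree than its denominator. -/
def StrictlyProperRF (g : RatFunc ℝ) : Prop := g.num.degree < g.denom.degree

open Module Submodule

theorem Submodule.det_subtype_comp_smithNormalForm_equiv {ι R M : Type*} [CommRing R] [IsDomain R]
    [IsPrincipalIdealRing R] [AddCommGroup M] [Module R M] [Fintype ι] [DecidableEq ι]
    {N : Submodule R M} (b : Basis ι R M) (h : finrank R N = finrank R M) :
    LinearMap.det (N.subtype ∘ₗ ((smithNormalFormTopBasis b h).equiv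
        (smithNormalFormBotBasis b h) (Equiv.refl ι) : M →ₗ[R] N)) =
      ∏ i, smithNormalFormCoeffs b h i := by
  rw [← LinearMap.det_toMatrix (smithNormalFormTopBasis b h), ← det_diagonal]
  congr 1
  ext i j
  rw [LinearMap.toMatrix_apply, LinearMap.comp_apply, LinearEquiv.coe_coe, Basis.equiv_apply,
    Equiv.refl_apply, subtype_apply, smithNormalFormBotBasis_def, map_smul, Basis.repr_self,
    Finsupp.smul_single, smul_eq_mul, mul_one, diagonal_apply, Finsupp.single_apply]
  grind

theorem LinearMap.finrank_quotient_range_eq_natDegree_det {K M : Type*} [Field K]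
    [AddCommGroup M] [Module K[X] M] [Module K M] [IsScalarTower K K[X] M]
    [Module.Free K[X] M] [Module.Finite K[X] M]
    {f : M →ₗ[K[X]] M} (hf : Function.Injective f) :
    finrank K (M ⧸ LinearMap.range f) = (LinearMap.det f).natDegree := by
  classical
  let b := Module.Free.chooseBasis K[X] M
  let e := LinearEquiv.ofInjective f hf
  have h : finrank K[X] (LinearMap.range f) = finrank K[X] M := e.finrank_eq.symm
  let a := smithNormalFormCoeffs b h
  have ha : ∀ i, a i ≠ 0 := smithNormalFormCoeffs_ne_zero b h
  have hdet : Associated (LinearMap.det f) (∏ i, a i) := by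
    have hfe : f = (LinearMap.range f).subtype ∘ₗ (e : M →ₗ[K[X]] LinearMap.range f) := by
      ext x; rfl
    rw [hfe, ← det_subtype_comp_smithNormalForm_equiv b h]
    exact LinearMap.associated_det_comp_equiv _ _ _
  have : ∀ i, FiniteDimensional K (K[X] ⧸ Ideal.span {a i}) :=
    fun i => (AdjoinRoot.powerBasis (ha i)).finite
  calc finrank K (M ⧸ LinearMap.range f)
      = finrank K (Π i, K[X] ⧸ Ideal.span {a i}) :=
        ((quotientEquivPiSpan _ b h).restrictScalars K).finrank_eq
    _ = ∑ i, (a i).natDegree := by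
        rw [finrank_pi_fintype]
        exact Finset.sum_congr rfl fun i _ => finrank_quotient_span_eq_natDegree
    _ = (∏ i, a i).natDegree := (natDegree_prod _ _ fun i _ => ha i).symm
    _ = (LinearMap.det f).natDegree :=
        natDegree_eq_of_degree_eq (degree_eq_degree_of_associated hdet.symm)

theorem strictlyProperRF_div_iff (p : ℝ[X]) {q : ℝ[X]} (hq : q ≠ 0) :
    StrictlyProperRF (algebraMap ℝ[X] (RatFunc ℝ) p / algebraMap ℝ[X] (RatFunc ℝ) q) ↔
      p.degree < q.degree := by
  set g := algebraMap ℝ[X] (RatFunc ℝ) p / algebraMap ℝ[X] (RatFunc ℝ) q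
  have hcross : g.num * q = p * g.denom := (RatFunc.num_mul_eq_mul_denom_iff hq).2 rfl
  have hdeg := congrArg degree hcross
  rw [degree_mul, degree_mul] at hdeg
  have hq' : q.degree ≠ ⊥ := degree_ne_bot.2 hq
  have hd' : g.denom.degree ≠ ⊥ := degree_ne_bot.2 g.denom_ne_zero
  rw [StrictlyProperRF, ← WithBot.add_lt_add_iff_right hq', hdeg, add_comm g.denom.degree,
    WithBot.add_lt_add_iff_right hd']

section

variable {n : Type*} [Fintype n] [DecidableEq n]

theorem Matrix.vecMul_map_inv {A K : Type*} [CommRing A] [Field K] (φ : A →+* K)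
    (R : Matrix n n A) (f : n → A) :
    (fun i => φ (f i)) ᵥ* (R.map φ)⁻¹ = fun j => φ ((f ᵥ* R.adjugate) j) / φ R.det := by
  have hdet : (R.map φ).det = φ R.det := (φ.map_det R).symm
  have hadj : (R.map φ).adjugate = R.adjugate.map φ := (φ.map_adjugate R).symm
  ext j
  rw [inv_def, hdet, hadj, Ring.inverse_eq_inv', vecMul_smul, Pi.smul_apply, smul_eq_mul,
    div_eq_inv_mul]
  simp only [vecMul, dotProduct, map_apply, map_sum, map_mul]

theorem Matrix.vecMul_vecMul_adjugate {A : Type*} [CommRing A] (R : Matrix n n A) (x : n → A) :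
    x ᵥ* R ᵥ* R.adjugate = R.det • x := by
  rw [vecMul_vecMul, mul_adjugate, vecMul_smul, vecMul_one]

theorem Matrix.det_vecMulLinear {A : Type*} [CommRing A] (R : Matrix n n A) :
    LinearMap.det R.vecMulLinear = R.det := by
  rw [← mulVecLin_transpose, ← toLin'_apply', LinearMap.det_toLin', det_transpose]

theorem Matrix.vecMul_injective_of_det_ne_zero {A : Type*} [CommRing A] [IsDomain A]
    {R : Matrix n n A} (hR : R.det ≠ 0) : Function.Injective R.vecMul :=
  fun x y (hxy : x ᵥ* R = y ᵥ* R) => smul_right_injective _ hR <| show R.det • x = R.det • y by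
    rw [← vecMul_vecMul_adjugate, hxy, vecMul_vecMul_adjugate]

variable {K : Type*} [Field K]

/-- The space `𝔛(R)` of rows `f` with `f R⁻¹` strictly proper, read through
`f R⁻¹ = (f adj R) / det R`. -/
noncomputable def Matrix.remainderSpace (R : Matrix n n K[X]) : Submodule K (n → K[X]) :=
  (Submodule.pi Set.univ fun _ => degreeLT K R.det.natDegree).comap
    ((vecMulLinear R.adjugate).restrictScalars K)

theorem Matrix.mem_remainderSpace {R : Matrix n n K[X]} {f : n → K[X]} :
    f ∈ R.remainderSpace ↔ ∀ j, ((f ᵥ* R.adjugate) j).degree < R.det.natDegree := by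
  simp [remainderSpace, mem_degreeLT]

theorem Matrix.disjoint_remainderSpace_range {R : Matrix n n K[X]} (hR : R.det ≠ 0) :
    Disjoint R.remainderSpace ((LinearMap.range R.vecMulLinear).restrictScalars K) := by
  rw [Submodule.disjoint_def]
  rintro _ hf ⟨g, rfl⟩
  simp only [mem_remainderSpace, vecMulLinear_apply, vecMul_vecMul_adjugate, Pi.smul_apply,
    smul_eq_mul, ← degree_eq_natDegree hR] at hf
  have hg : g = 0 := funext fun j => by
    by_contra hgj
    exact (degree_le_mul_left R.det hgj).not_gt (hf j)
  simp [hg]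

theorem Matrix.codisjoint_remainderSpace_range {R : Matrix n n K[X]} (hR : R.det ≠ 0) :
    Codisjoint R.remainderSpace ((LinearMap.range R.vecMulLinear).restrictScalars K) := by
  rw [codisjoint_iff_le_sup]
  intro x _
  let q : n → K[X] := fun j => (x ᵥ* R.adjugate) j / R.det
  have hrem : x - q ᵥ* R ∈ R.remainderSpace := by
    rw [mem_remainderSpace]
    intro j
    rw [sub_vecMul, vecMul_vecMul_adjugate, Pi.sub_apply, Pi.smul_apply, smul_eq_mul,
      ← EuclideanDomain.mod_eq_sub_mul_div, ← degree_eq_natDegree hR]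
    exact degree_mod_lt _ hR
  exact Submodule.mem_sup.2 ⟨_, hrem, q ᵥ* R, ⟨q, rfl⟩, sub_add_cancel _ _⟩

theorem Matrix.isCompl_remainderSpace_range {R : Matrix n n K[X]} (hR : R.det ≠ 0) :
    IsCompl R.remainderSpace ((LinearMap.range R.vecMulLinear).restrictScalars K) :=
  ⟨disjoint_remainderSpace_range hR, codisjoint_remainderSpace_range hR⟩

theorem Matrix.finrank_remainderSpace {R : Matrix n n K[X]} (hR : R.det ≠ 0) :
    finrank K R.remainderSpace = R.det.natDegree := by
  rw [← (quotientEquivOfIsCompl _ _ (isCompl_remainderSpace_range hR).symm).finrank_eq,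
    (Quotient.restrictScalarsEquiv K _).finrank_eq,
    LinearMap.finrank_quotient_range_eq_natDegree_det (vecMul_injective_of_det_ne_zero hR),
    det_vecMulLinear]

end

/-- for a nonsingular `R ∈ ℝ[ξ]^{w×w}`, the set of polynomial row vectors
`f` with `f R⁻¹` strictly proper is an ℝ-subspace of dimension `deg det R`. -/
theorem stmt5 (w : ℕ)
    (R : Matrix (Fin w) (Fin w) (Polynomial ℝ)) (hR : R.det ≠ 0) :
    ∃ V : Submodule ℝ (Fin w → Polynomial ℝ),
      (V : Set (Fin w → Polynomial ℝ)) =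
        { f | ∀ j, StrictlyProperRF
            (Matrix.vecMul (fun i => algebraMap (Polynomial ℝ) (RatFunc ℝ) (f i))
              ((R.map (algebraMap (Polynomial ℝ) (RatFunc ℝ)))⁻¹) j) } ∧
      Module.finrank ℝ V = R.det.natDegree := by
  refine ⟨R.remainderSpace, ?_, finrank_remainderSpace hR⟩
  ext f
  simp only [SetLike.mem_coe, mem_remainderSpace, Set.mem_ofPred_eq, vecMul_map_inv,
    strictlyProperRF_div_iff _ hR, degree_eq_natDegree hR]
end

section
/- Let R₁, R₂ ∈ ℝ[ξ]^{w×w} be nonsingular polynomial matrices such that R₂ R₁⁻¹ is a strictly proper rational matrix. Then 𝔛(R₂) ⊆ 𝔛(R₁), where 𝔛(Rᵢ) = { f ∈ ℝ[ξ]^{1×w} : f Rᵢ⁻¹ strictly proper }. Consequently deg det R₂ < deg det R₁ whenever R₂ ≠ 0. -/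
open Matrix Polynomial

noncomputable def toRF (w : ℕ) (R : Matrix (Fin w) (Fin w) (Polynomial ℝ)) :
    Matrix (Fin w) (Fin w) (RatFunc ℝ) :=
  R.map (algebraMap (Polynomial ℝ) (RatFunc ℝ))

/-- The "state space" `𝔛(R)` of polynomial row vectors `f` such that `f R⁻¹` is
strictly proper. -/
def XSpace (w : ℕ) (R : Matrix (Fin w) (Fin w) (Polynomial ℝ)) :
    Set (Fin w → Polynomial ℝ) :=
  { f | ∀ j, StrictlyProperRF
      (Matrix.vecMul (fun i => algebraMap (Polynomial ℝ) (RatFunc ℝ) (f i))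
        ((toRF w R)⁻¹) j) }

namespace Valuation

variable {K Γ₀ : Type*} [CommRing K] [LinearOrderedCommMonoidWithZero Γ₀] (v : Valuation K Γ₀)
  {m n : Type*} [Fintype m]

theorem map_vecMul_lt_one [Nontrivial Γ₀] {x : m → K} {M : Matrix m n K} (hx : ∀ i, v (x i) < 1)
    (hM : ∀ i j, v (M i j) ≤ 1) (j : n) : v ((x ᵥ* M) j) < 1 :=
  v.map_sum_lt one_ne_zero fun i _ => by
    rw [map_mul]
    exact mul_lt_one_of_lt_of_le (hx i) (hM i j)

theorem map_prod_lt_one {f : m → K} (hf : ∀ i, v (f i) < 1) [Nonempty m] :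
    v (∏ i, f i) < 1 := by
  classical
  obtain ⟨i₀⟩ := ‹Nonempty m›
  rw [← Finset.mul_prod_erase _ _ (Finset.mem_univ i₀), map_mul, map_prod]
  exact mul_lt_one_of_lt_of_le (hf i₀) (Finset.prod_le_one' fun i _ => (hf i).le)

theorem map_det_lt_one [Nontrivial Γ₀] [DecidableEq m] [Nonempty m] {M : Matrix m m K}
    (hM : ∀ i j, v (M i j) < 1) : v M.det < 1 := by
  rw [det_apply]
  refine v.map_sum_lt one_ne_zero fun σ _ => ?_
  have hprod : v (∏ i, M (σ i) i) < 1 := v.map_prod_lt_one fun i => hM (σ i) i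
  rcases Int.units_eq_one_or (Equiv.Perm.sign σ) with h | h <;> simpa [h] using hprod

end Valuation

section InftyValuation

variable [DecidableEq (RatFunc ℝ)]

local notation "v∞" => RatFunc.inftyValuation ℝ

theorem strictlyProperRF_iff_inftyValuation_lt_one (g : RatFunc ℝ) :
    StrictlyProperRF g ↔ v∞ g < 1 := by
  rcases eq_or_ne g 0 with rfl | hg
  · simp [StrictlyProperRF]
  · rw [StrictlyProperRF, RatFunc.inftyValuation_apply, RatFunc.inftyValuation_of_nonzero _ hg,
      ← WithZero.exp_zero, WithZero.exp_lt_exp, RatFunc.intDegree, sub_neg, Nat.cast_lt,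
      Polynomial.natDegree_lt_natDegree_iff (RatFunc.num_ne_zero hg)]

theorem inftyValuation_det_toRF {w : ℕ} {R : Matrix (Fin w) (Fin w) ℝ[X]} (hR : R.det ≠ 0) :
    v∞ (toRF w R).det = WithZero.exp (R.det.natDegree : ℤ) := by
  rw [toRF, ← RingHom.mapMatrix_apply, ← RingHom.map_det, RatFunc.inftyValuation_apply,
    RatFunc.inftyValuation.polynomial _ hR]

end InftyValuation

theorem isUnit_det_toRF {w : ℕ} {R : Matrix (Fin w) (Fin w) ℝ[X]} (hR : R.det ≠ 0) :
    IsUnit (toRF w R).det := by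
  rw [toRF, ← RingHom.mapMatrix_apply, ← RingHom.map_det]
  exact (RatFunc.algebraMap_ne_zero hR).isUnit

theorem xSpace_subset_xSpace {w : ℕ} {R₁ R₂ : Matrix (Fin w) (Fin w) ℝ[X]} (hR₂ : R₂.det ≠ 0)
    (hsp : ∀ i j, StrictlyProperRF ((toRF w R₂ * (toRF w R₁)⁻¹) i j)) :
    XSpace w R₂ ⊆ XSpace w R₁ := by
  classical
  intro f hf j
  set v := RatFunc.inftyValuation ℝ
  simp only [XSpace, Set.mem_ofPred_eq, strictlyProperRF_iff_inftyValuation_lt_one] at hf hsp ⊢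
  have hfactor : (fun i => algebraMap ℝ[X] (RatFunc ℝ) (f i)) ᵥ* (toRF w R₁)⁻¹ =
      ((fun i => algebraMap ℝ[X] (RatFunc ℝ) (f i)) ᵥ* (toRF w R₂)⁻¹) ᵥ*
        (toRF w R₂ * (toRF w R₁)⁻¹) := by
    rw [vecMul_vecMul, ← Matrix.mul_assoc, nonsing_inv_mul _ (isUnit_det_toRF hR₂),
      Matrix.one_mul]
  rw [hfactor]
  exact v.map_vecMul_lt_one hf (fun i j => (hsp i j).le) j

theorem natDegree_det_lt_natDegree_det {w : ℕ} [NeZero w] {R₁ R₂ : Matrix (Fin w) (Fin w) ℝ[X]}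
    (hR₁ : R₁.det ≠ 0) (hR₂ : R₂.det ≠ 0)
    (hsp : ∀ i j, StrictlyProperRF ((toRF w R₂ * (toRF w R₁)⁻¹) i j)) :
    R₂.det.natDegree < R₁.det.natDegree := by
  classical
  set v := RatFunc.inftyValuation ℝ
  simp only [strictlyProperRF_iff_inftyValuation_lt_one] at hsp
  have hquot : (toRF w R₂ * (toRF w R₁)⁻¹).det * (toRF w R₁).det = (toRF w R₂).det := by
    rw [det_mul, det_nonsing_inv, mul_assoc, Ring.inverse_mul_cancel _ (isUnit_det_toRF hR₁),
      mul_one]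
  have hlt : v (toRF w R₂).det < v (toRF w R₁).det := by
    rw [← hquot, map_mul]
    refine mul_lt_of_lt_one_left ?_ (v.map_det_lt_one hsp)
    rw [inftyValuation_det_toRF hR₁]
    exact WithZero.zero_lt_coe _
  rwa [inftyValuation_det_toRF hR₁, inftyValuation_det_toRF hR₂, WithZero.exp_lt_exp,
    Nat.cast_lt] at hlt

/-- if `R₂ R₁⁻¹` is strictly proper then `𝔛(R₂) ⊆ 𝔛(R₁)`, and
`deg det R₂ < deg det R₁` whenever `R₂ ≠ 0`. -/
theorem stmt6 (w : ℕ)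
    (R₁ R₂ : Matrix (Fin w) (Fin w) (Polynomial ℝ))
    (hR₁ : R₁.det ≠ 0) (hR₂ : R₂.det ≠ 0)
    (hsp : ∀ i j, StrictlyProperRF ((toRF w R₂ * (toRF w R₁)⁻¹) i j)) :
    XSpace w R₂ ⊆ XSpace w R₁ ∧
      (R₂ ≠ 0 → R₂.det.natDegree < R₁.det.natDegree) := by
  refine ⟨xSpace_subset_xSpace hR₂ hsp, fun hne => ?_⟩
  have : NeZero w := ⟨by rintro rfl; exact hne (Subsingleton.elim _ _)⟩
  exact natDegree_det_lt_natDegree_det hR₁ hR₂ hsp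
end

section
/- Let D, N, Q ∈ ℝ[ξ]^{w×w} with D nonsingular, satisfy the polynomial equation D(−ξ)ᵀN(ξ) + N(−ξ)ᵀD(ξ) = Q(−ξ)ᵀQ(ξ). Suppose N is Hurwitz and rank col(D(λ), Q(λ)) = w for all λ ∈ ℂ. If λ ∈ ℂ and v ∈ ℂ^w, v ≠ 0, satisfy Q(λ)v = 0 and N(λ)v = 0, a contradiction follows; hence rank col(N(λ), Q(λ)) = w for all λ ∈ ℂ. -/
/-!
Suppose `N(λ)v = 0` and `Q(λ)v = 0` with `v ≠ 0`. Evaluating the polynomial identity at `λ` and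
applying it to `v` leaves `N(−λ)ᵀ D(λ) v = 0`. Since `det N(λ) = 0`, Hurwitzness gives
`Re λ < 0`, so `−λ` lies in the open right half plane and `N(−λ)` is nonsingular. Hence
`D(λ)v = 0`, contradicting the full column rank of `col(D(λ), Q(λ))`.
-/

open Matrix Polynomial

/-- Evaluation of a real polynomial matrix at a complex point. -/
noncomputable def evalC {w : ℕ} (P : Matrix (Fin w) (Fin w) (Polynomial ℝ)) (z : ℂ) :
    Matrix (Fin w) (Fin w) ℂ :=
  P.map (fun p => Polynomial.aeval z p)

/-- Substitute `−ξ` for `ξ` in a polynomial matrix. -/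
noncomputable def negArg {w : ℕ} (P : Matrix (Fin w) (Fin w) (Polynomial ℝ)) :
    Matrix (Fin w) (Fin w) (Polynomial ℝ) :=
  P.map (fun p => p.comp (-Polynomial.X))

namespace Matrix

variable {m₁ m₂ n K : Type*} [Fintype n] [Field K]

theorem rank_eq_card_iff_forall_mulVec_eq_zero {m : Type*} (M : Matrix m n K) :
    M.rank = Fintype.card n ↔ ∀ v, M *ᵥ v = 0 → v = 0 := by
  have rank_nullity := LinearMap.finrank_range_add_finrank_ker M.mulVecLin
  rw [Module.finrank_fintype_fun_eq_card] at rank_nullity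
  have hker : (∀ v, M *ᵥ v = 0 → v = 0) ↔ LinearMap.ker M.mulVecLin = ⊥ := by
    rw [LinearMap.ker_eq_bot']; rfl
  rw [rank, hker, ← Submodule.finrank_eq_zero]
  omega

theorem fromRows_mulVec_eq_zero_iff (A : Matrix m₁ n K) (B : Matrix m₂ n K) (v : n → K) :
    fromRows A B *ᵥ v = 0 ↔ A *ᵥ v = 0 ∧ B *ᵥ v = 0 := by
  rw [fromRows_mulVec, ← Sum.elim_zero_zero, Sum.elim_eq_iff]

theorem rank_fromRows_eq_card_iff (A : Matrix m₁ n K) (B : Matrix m₂ n K) :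
    (fromRows A B).rank = Fintype.card n ↔ ∀ v, A *ᵥ v = 0 → B *ᵥ v = 0 → v = 0 := by
  simp only [rank_eq_card_iff_forall_mulVec_eq_zero, fromRows_mulVec_eq_zero_iff, and_imp]

theorem mulVec_eq_zero_of_transpose_mul_add_transpose_mul_eq [DecidableEq n] {R : Type*}
    [CommRing R] [NoZeroDivisors R] {D N Q D' N' Q' : Matrix n n R}
    (h : D'ᵀ * N + N'ᵀ * D = Q'ᵀ * Q) (hN' : N'.det ≠ 0) {v : n → R} (hN : N *ᵥ v = 0)
    (hQ : Q *ᵥ v = 0) : D *ᵥ v = 0 := by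
  refine eq_zero_of_mulVec_eq_zero (by rwa [det_transpose]) ?_
  have hv := congrArg (· *ᵥ v) h
  simpa only [add_mulVec, ← mulVec_mulVec, hN, hQ, mulVec_zero, zero_add] using hv

end Matrix

section evalC

variable {w : ℕ}

theorem evalC_add (P P' : Matrix (Fin w) (Fin w) ℝ[X]) (z : ℂ) :
    evalC (P + P') z = evalC P z + evalC P' z :=
  Matrix.map_add _ (map_add _) _ _

theorem evalC_mul (P P' : Matrix (Fin w) (Fin w) ℝ[X]) (z : ℂ) :
    evalC (P * P') z = evalC P z * evalC P' z :=
  Matrix.map_mul (f := (aeval z : ℝ[X] →ₐ[ℝ] ℂ).toRingHom)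

theorem evalC_transpose (P : Matrix (Fin w) (Fin w) ℝ[X]) (z : ℂ) :
    evalC Pᵀ z = (evalC P z)ᵀ :=
  transpose_map

theorem evalC_negArg (P : Matrix (Fin w) (Fin w) ℝ[X]) (z : ℂ) :
    evalC (negArg P) z = evalC P (-z) := by
  ext i j
  simp [evalC, negArg, aeval_comp]

theorem det_evalC (P : Matrix (Fin w) (Fin w) ℝ[X]) (z : ℂ) :
    (evalC P z).det = aeval z P.det :=
  ((aeval z : ℝ[X] →ₐ[ℝ] ℂ).toRingHom.map_det P).symm

end evalC

theorem det_evalC_neg_ne_zero_of_hurwitz {w : ℕ} {N : Matrix (Fin w) (Fin w) ℝ[X]}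
    (hN : ∀ z : ℂ, aeval z N.det = 0 → z.re < 0) {lam : ℂ} (hlam : (evalC N lam).det = 0) :
    (evalC N (-lam)).det ≠ 0 := by
  rw [det_evalC] at hlam ⊢
  intro hneg
  have hre := hN lam hlam
  have hre_neg := hN (-lam) hneg
  rw [Complex.neg_re] at hre_neg
  linarith

theorem stmt9_general (w : ℕ)
    (D N Q : Matrix (Fin w) (Fin w) (Polynomial ℝ))
    (hPLE : (negArg D)ᵀ * N + (negArg N)ᵀ * D = (negArg Q)ᵀ * Q)
    (hNHurwitz : ∀ z : ℂ, Polynomial.aeval z N.det = 0 → z.re < 0)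
    (hrank : ∀ lam : ℂ, (Matrix.fromRows (evalC D lam) (evalC Q lam)).rank = w) :
    ∀ lam : ℂ, (Matrix.fromRows (evalC N lam) (evalC Q lam)).rank = w := by
  intro lam
  have hDQ := (rank_fromRows_eq_card_iff _ _).1 ((hrank lam).trans (Fintype.card_fin w).symm)
  refine ((rank_fromRows_eq_card_iff _ _).2 fun v hNv hQv => ?_).trans (Fintype.card_fin w)
  by_contra hv
  have hNsing : (evalC N lam).det = 0 := Matrix.exists_mulVec_eq_zero_iff.1 ⟨v, hv, hNv⟩
  have hPLE_lam : (evalC D (-lam))ᵀ * evalC N lam + (evalC N (-lam))ᵀ * evalC D lam =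
      (evalC Q (-lam))ᵀ * evalC Q lam := by
    simpa only [evalC_add, evalC_mul, evalC_transpose, evalC_negArg] using
      congrArg (evalC · lam) hPLE
  exact hv <| hDQ v (mulVec_eq_zero_of_transpose_mul_add_transpose_mul_eq hPLE_lam
    (det_evalC_neg_ne_zero_of_hurwitz hNHurwitz hNsing) hNv hQv) hQv

/-- if `D(−ξ)ᵀN(ξ) + N(−ξ)ᵀD(ξ) = Q(−ξ)ᵀQ(ξ)`, `N` is Hurwitz, and
`col(D(λ),Q(λ))` has full rank `w` for all `λ ∈ ℂ`, then also `col(N(λ),Q(λ))` has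
rank `w` for all `λ ∈ ℂ`. -/
theorem stmt9 (w : ℕ)
    (D N Q : Matrix (Fin w) (Fin w) (Polynomial ℝ))
    (hDns : D.det ≠ 0)
    (hPLE : (negArg D)ᵀ * N + (negArg N)ᵀ * D = (negArg Q)ᵀ * Q)
    (hNHurwitz : ∀ z : ℂ, Polynomial.aeval z N.det = 0 → z.re < 0)
    (hrank : ∀ lam : ℂ, (Matrix.fromRows (evalC D lam) (evalC Q lam)).rank = w) :
    ∀ lam : ℂ, (Matrix.fromRows (evalC N lam) (evalC Q lam)).rank = w :=
  stmt9_general w D N Q hPLE hNHurwitz hrank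
end

section
/- Let Φ ∈ ℝ[ξ] be an even polynomial (Φ(−ξ) = Φ(ξ)) with Φ(iω) > 0 for all ω ∈ ℝ. Then there exists Q ∈ ℝ[ξ] Hurwitz with Φ(ξ) = Q(−ξ)Q(ξ) (scalar polynomial spectral factorization). -/
open Polynomial Complex

/-!
Since `Φ` is even, its complex roots are symmetric under `z ↦ -z`, and positivity on the
imaginary axis keeps them off it; so the roots split into the multiset `S` of roots with
negative real part and its negative `-S`. With `q = ∏_{s ∈ S} (X - s)` this gives
`Φ = κ · q(-X) q(X)` for a constant `κ`. As `Φ` is real, `S` is closed under conjugation, so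
`q` is real, hence so is `κ`, and `Φ(0) = κ q(0)² > 0` forces `κ > 0`; take `Q = √κ · q`.
-/

namespace Multiset

lemma filter_re_neg_map_conj {s : Multiset ℂ} (hs : s.map (starRingEnd ℂ) = s) :
    (s.filter (·.re < 0)).map (starRingEnd ℂ) = s.filter (·.re < 0) := by
  conv_rhs => rw [← hs]
  rw [filter_map]
  rfl

lemma eq_filter_re_neg_add_map_neg {s : Multiset ℂ} (hs : s.map (- ·) = s)
    (hre : ∀ z ∈ s, z.re ≠ 0) :
    s = s.filter (·.re < 0) + (s.filter (·.re < 0)).map (- ·) := by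
  conv_lhs => rw [← filter_add_not (·.re < 0) s]
  congr 1
  conv_lhs => rw [← hs]
  rw [filter_map]
  refine congrArg _ (filter_congr fun z hz => ?_)
  simp only [Function.comp_apply, neg_re, not_lt, neg_nonneg]
  exact ⟨fun h => h.lt_of_ne (hre z hz), le_of_lt⟩

end Multiset

namespace Polynomial

lemma multiset_prod_X_sub_C_map_neg {R : Type*} [CommRing R] (s : Multiset R) :
    ((s.map (- ·)).map (X - C ·)).prod =
      (-1) ^ Multiset.card s * ((s.map (X - C ·)).prod).comp (-X) := by
  induction s using Multiset.induction_on with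
  | empty => simp
  | cons a s ih =>
    simp only [Multiset.map_cons, Multiset.prod_cons, Multiset.card_cons, ih, mul_comp,
      sub_comp, X_comp, C_comp, map_neg, pow_succ]
    ring

lemma map_multiset_prod_X_sub_C {R S : Type*} [CommRing R] [CommRing S] (f : R →+* S)
    (s : Multiset R) : ((s.map (X - C ·)).prod).map f = ((s.map f).map (X - C ·)).prod := by
  simp [Polynomial.map_multiset_prod, Multiset.map_map]

lemma exists_map_ofReal_eq_of_map_conj_eq {q : ℂ[X]} (hq : q.map (starRingEnd ℂ) = q) :
    ∃ Q : ℝ[X], Q.map (algebraMap ℝ ℂ) = q := by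
  rw [← mem_lifts, lifts_iff_coeff_lifts]
  intro n
  exact ⟨(q.coeff n).re, conj_eq_iff_re.mp (by simpa using congrArg (coeff · n) hq)⟩

lemma roots_map_conj_of_real (Φ : ℝ[X]) :
    (Φ.map (algebraMap ℝ ℂ)).roots.map (starRingEnd ℂ) = (Φ.map (algebraMap ℝ ℂ)).roots := by
  rw [← (IsAlgClosed.splits _).roots_map, Polynomial.map_map]
  congr 2
  ext x : 1
  simp

noncomputable def leftHalfPlaneRoots (p : ℂ[X]) : Multiset ℂ := p.roots.filter (·.re < 0)

noncomputable def leftHalfPlaneFactor (p : ℂ[X]) : ℂ[X] :=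
  ((leftHalfPlaneRoots p).map (X - C ·)).prod

lemma re_lt_zero_of_eval_leftHalfPlaneFactor_eq_zero {p : ℂ[X]} {z : ℂ}
    (hz : (leftHalfPlaneFactor p).eval z = 0) : z.re < 0 := by
  have hmonic : (leftHalfPlaneFactor p).Monic :=
    monic_multiset_prod_of_monic _ _ fun _ _ => monic_X_sub_C _
  have hz' : z ∈ (leftHalfPlaneFactor p).roots := (mem_roots hmonic.ne_zero).mpr hz
  rw [leftHalfPlaneFactor, roots_multiset_prod_X_sub_C] at hz'
  exact (Multiset.mem_filter.mp hz').2

theorem eq_C_mul_leftHalfPlaneFactor_comp_neg_X_mul {p : ℂ[X]} (heven : p.comp (-X) = p)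
    (hre : ∀ z ∈ p.roots, z.re ≠ 0) :
    p = C (p.leadingCoeff * (-1) ^ Multiset.card (leftHalfPlaneRoots p)) *
      ((leftHalfPlaneFactor p).comp (-X) * leftHalfPlaneFactor p) := by
  have hroots : p.roots = leftHalfPlaneRoots p + (leftHalfPlaneRoots p).map (- ·) :=
    Multiset.eq_filter_re_neg_add_map_neg (by rw [← roots_comp_neg_X, heven]) hre
  conv_lhs => rw [(IsAlgClosed.splits p).eq_prod_roots, hroots, Multiset.map_add,
    Multiset.prod_add, multiset_prod_X_sub_C_map_neg]
  rw [leftHalfPlaneFactor]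
  simp only [map_mul, map_pow, map_neg, map_one]
  ring

lemma leftHalfPlaneFactor_map_conj (Φ : ℝ[X]) :
    (leftHalfPlaneFactor (Φ.map (algebraMap ℝ ℂ))).map (starRingEnd ℂ) =
      leftHalfPlaneFactor (Φ.map (algebraMap ℝ ℂ)) := by
  rw [leftHalfPlaneFactor, map_multiset_prod_X_sub_C, leftHalfPlaneRoots,
    Multiset.filter_re_neg_map_conj (roots_map_conj_of_real Φ)]

theorem exists_eq_C_mul_comp_neg_X_mul_of_comp_neg_X_eq {Φ : ℝ[X]} (heven : Φ.comp (-X) = Φ)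
    (hre : ∀ z : ℂ, aeval z Φ = 0 → z.re ≠ 0) :
    ∃ (κ : ℝ) (Q : ℝ[X]), Φ = C κ * (Q.comp (-X) * Q) ∧ ∀ z : ℂ, aeval z Q = 0 → z.re < 0 := by
  set P := Φ.map (algebraMap ℝ ℂ)
  obtain ⟨Q, hQ⟩ := exists_map_ofReal_eq_of_map_conj_eq (leftHalfPlaneFactor_map_conj Φ)
  refine ⟨Φ.leadingCoeff * (-1) ^ Multiset.card (leftHalfPlaneRoots P), Q, ?_, fun z hz => ?_⟩
  · have hPeven : P.comp (-X) = P := by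
      simpa [P, map_comp] using congrArg (map (algebraMap ℝ ℂ)) heven
    have hPre : ∀ z ∈ P.roots, z.re ≠ 0 := fun z hz =>
      hre z (by rw [aeval_def, ← eval_map]; exact (mem_roots'.mp hz).2)
    have hfac := eq_C_mul_leftHalfPlaneFactor_comp_neg_X_mul hPeven hPre
    rw [leadingCoeff_map_of_injective (algebraMap ℝ ℂ).injective] at hfac
    apply map_injective (algebraMap ℝ ℂ) (algebraMap ℝ ℂ).injective
    simpa [Polynomial.map_mul, map_comp, hQ] using hfac
  · exact re_lt_zero_of_eval_leftHalfPlaneFactor_eq_zero (by rwa [← hQ, eval_map, ← aeval_def])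

end Polynomial

/-- scalar polynomial spectral factorization.  An even real polynomial
`Φ` which is (real and) strictly positive on the imaginary axis admits a Hurwitz
spectral factor: `Φ(ξ) = Q(−ξ)Q(ξ)` with all roots of `Q` in the open left half-plane. -/
theorem stmt19 (Φ : Polynomial ℝ)
    (heven : Φ.comp (-Polynomial.X) = Φ)
    (hpos : ∀ ω : ℝ, ∃ r : ℝ, 0 < r ∧ Polynomial.aeval (Complex.I * ω) Φ = (r : ℂ)) :
    ∃ Q : Polynomial ℝ,
      (∀ z : ℂ, Polynomial.aeval z Q = 0 → z.re < 0) ∧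
      Φ = Q.comp (-Polynomial.X) * Q := by
  have hre : ∀ z : ℂ, aeval z Φ = 0 → z.re ≠ 0 := by
    intro z hz hz_re
    obtain ⟨r, hr, hzr⟩ := hpos z.im
    have hz_imag : I * z.im = z := by apply Complex.ext <;> simp [hz_re]
    rw [hz_imag, hz] at hzr
    exact hr.ne' (by exact_mod_cast hzr.symm)
  obtain ⟨κ, Q, hΦ, hQ⟩ := exists_eq_C_mul_comp_neg_X_mul_of_comp_neg_X_eq heven hre
  have hκ : 0 < κ := by
    obtain ⟨r, hr, h0⟩ := hpos 0
    rw [ofReal_zero, mul_zero, ← map_zero (algebraMap ℝ ℂ),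
      aeval_algebraMap_apply_eq_algebraMap_eval] at h0
    have hΦ0 : κ * (Q.eval 0 * Q.eval 0) = r := by simpa [hΦ] using ofReal_injective h0
    exact pos_of_mul_pos_left (hΦ0 ▸ hr) (mul_self_nonneg _)
  refine ⟨C √κ * Q, fun z hz => hQ z ?_, ?_⟩
  · simpa [Real.sqrt_ne_zero'.mpr hκ] using hz
  · have hκ_sq : C κ = C √κ * C √κ := by rw [← C_mul, Real.mul_self_sqrt hκ.le]
    rw [hΦ, mul_comp, C_comp, hκ_sq]
    ring
end
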